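/- If the left super finitely presented dimension of R is finite, i.e., sup{pd_R(M) : M super finitely presented} = n < ∞, then every Gorenstein weak injective R-module is weak injective. -/

import Mathlib

/-!
Dimension shifting. Let `N` be super finitely presented. If `0 → K → W → C → 0` is exact and
`Ext^{k+1}(N, W) = 0`, then `Ext^{k+2}(N, K) = 0` forces `Ext^{k+1}(N, C) = 0`. Weak injective
modules `W` have `Ext^{≥1}(N, W) = 0`, because every syzygy of `N` is again super finitely
presented. A Gorenstein weak injective `M` is the image of `W₀ → W₁` in an exact complex of weak
injectives, so shifting `n` times to the left reduces `Ext¹(N, M) = 0` to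
`Ext^{n+1}(N, K) = 0` for a kernel `K`, which holds as `pd N ≤ n`.
-/

open CategoryTheory Opposite

noncomputable section

variable (R : Type) [Ring R]

/-- Vanishing of `Ext^i_R(N, M)` for left `R`-modules. -/
def ExtVanishes (N M : ModuleCat.{0} R) (i : ℕ) : Prop :=
  Subsingleton (((Ext ℤ (ModuleCat.{0} R) i).obj (op N)).obj M)

/-- A left `R`-module `N` is super finitely presented if it admits a resolution
`⋯ → F₁ → F₀ → N → 0` by finitely generated projective modules. -/
def IsSuperFinitelyPresented (N : ModuleCat.{0} R) : Prop :=
  ∃ (F : ℕ → ModuleCat.{0} R) (d : ∀ n, F (n + 1) ⟶ F n) (ε : F 0 ⟶ N),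
    (∀ n, Module.Finite R (F n)) ∧ (∀ n, Module.Projective R (F n)) ∧
    Function.Surjective ε ∧ Function.Exact (d 0) ε ∧
    ∀ n, Function.Exact (d (n + 1)) (d n)

/-- `M` is weak injective if `Ext¹_R(N, M) = 0` for every super finitely presented `N`. -/
def IsWeakInjective (M : ModuleCat.{0} R) : Prop :=
  ∀ N : ModuleCat.{0} R, IsSuperFinitelyPresented R N → ExtVanishes R N M 1

/-- `N` is super finitely presented of finite projective dimension, i.e. admits a finite
resolution `0 → Fₙ → ⋯ → F₀ → N → 0` by finitely generated projective modules. -/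
def IsSFPOfFinitePd (N : ModuleCat.{0} R) : Prop :=
  ∃ (n : ℕ) (F : ℕ → ModuleCat.{0} R) (d : ∀ k, F (k + 1) ⟶ F k) (ε : F 0 ⟶ N),
    (∀ k, Module.Finite R (F k)) ∧ (∀ k, Module.Projective R (F k)) ∧
    Function.Surjective ε ∧ Function.Exact (d 0) ε ∧
    (∀ k, Function.Exact (d (k + 1)) (d k)) ∧
    ∀ k, n < k → Subsingleton (F k)

/-- `M` is Gorenstein weak injective: there is an exact sequence
`⋯ → W₁ → W₀ → W⁰ → W¹ → ⋯` of weak injective modules (indexed here by `ℤ`) with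
`M = Coker(W₁ → W₀)` (witnessed by a surjection `π : W 0 → M` and an injection
`ι : M → W 1` with `π ≫ ι = d 0`), which stays exact after applying `Hom_R(N, -)`
for every super finitely presented `N` of finite projective dimension. -/
def IsGorensteinWeakInjective (M : ModuleCat.{0} R) : Prop :=
  ∃ (W : ℤ → ModuleCat.{0} R) (d : ∀ n : ℤ, W n ⟶ W (n + 1))
      (π : W 0 ⟶ M) (ι : M ⟶ W 1),
    (∀ n, IsWeakInjective R (W n)) ∧
    (∀ n, Function.Exact (d n) (d (n + 1))) ∧
    Function.Surjective π ∧ Function.Injective ι ∧ π ≫ ι = d 0 ∧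
    Function.Exact (d (-1)) π ∧
    ∀ N : ModuleCat.{0} R, IsSFPOfFinitePd R N →
      ∀ (n : ℤ) (g : N ⟶ W (n + 1)), g ≫ d (n + 1) = 0 → ∃ f : N ⟶ W n, f ≫ d n = g

/-- `N` has projective dimension at most `n`: there is an exact sequence
`0 → Fₙ → ⋯ → F₀ → N → 0` with each `Fᵢ` projective. -/
def HasProjDimLE (N : ModuleCat.{0} R) (n : ℕ) : Prop :=
  ∃ (F : ℕ → ModuleCat.{0} R) (d : ∀ k, F (k + 1) ⟶ F k) (ε : F 0 ⟶ N),
    (∀ k, Module.Projective R (F k)) ∧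
    Function.Surjective ε ∧ Function.Exact (d 0) ε ∧
    (∀ k, Function.Exact (d (k + 1)) (d k)) ∧
    ∀ k, n < k → Subsingleton (F k)

open Limits

-- When `F` is a projective resolution of `N`, this says `Ext^{k+1}(N, X) = 0`.
def CocyclesAreCoboundaries {C : Type*} [Category C] [HasZeroMorphisms C] {F : ℕ → C}
    (d : ∀ k, F (k + 1) ⟶ F k) (X : C) (k : ℕ) : Prop :=
  ∀ g : F (k + 1) ⟶ X, d (k + 1) ≫ g = 0 → ∃ h : F k ⟶ X, d k ≫ h = g

section DimensionShifting

variable {C : Type*} [Category C] [Abelian C]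

theorem CocyclesAreCoboundaries.of_shortExact {F : ℕ → C} {d : ∀ k, F (k + 1) ⟶ F k} {k : ℕ}
    [Projective (F (k + 1))] (hd : d (k + 1 + 1) ≫ d (k + 1) = 0)
    {S : ShortComplex C} (hS : S.ShortExact)
    (h₁ : CocyclesAreCoboundaries d S.X₁ (k + 1)) (h₂ : CocyclesAreCoboundaries d S.X₂ k) :
    CocyclesAreCoboundaries d S.X₃ k := by
  intro g hg
  have := hS.mono_f
  have := hS.epi_g
  obtain ⟨u, hu⟩ : ∃ u : F (k + 1) ⟶ S.X₂, u ≫ S.g = g :=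
    ⟨Projective.factorThru g S.g, Projective.factorThru_comp g S.g⟩
  obtain ⟨v, hv⟩ : ∃ v : F (k + 1 + 1) ⟶ S.X₁, v ≫ S.f = d (k + 1) ≫ u :=
    ⟨hS.exact.lift (d (k + 1) ≫ u) (by simp [hu, hg]), hS.exact.lift_f _ _⟩
  obtain ⟨c, hc⟩ := h₁ v (by simp [← cancel_mono S.f, hv, reassoc_of% hd])
  obtain ⟨h, hh⟩ := h₂ (u - c ≫ S.f) (by simp [reassoc_of% hc, hv])
  exact ⟨h ≫ S.g, by simp [reassoc_of% hh, hu]⟩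

theorem kernel_ι_comp_eq_zero_of_comp_mono {X Y Z : C} {f : X ⟶ Y} {g : Y ⟶ Z} [Mono g]
    {h : X ⟶ Z} (hfg : f ≫ g = h) : kernel.ι h ≫ f = 0 := by
  simp [← cancel_mono g, hfg]

theorem shortExact_kernel_ι_of_comp_mono {X Y Z : C} {f : X ⟶ Y} {g : Y ⟶ Z} [Epi f] [Mono g]
    {h : X ⟶ Z} (hfg : f ≫ g = h) :
    (ShortComplex.mk (kernel.ι h) f (kernel_ι_comp_eq_zero_of_comp_mono hfg)).ShortExact where
  exact := ShortComplex.exact_of_f_is_kernel _ (isKernelOfComp g h (kernelIsKernel h) _ hfg)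

variable {F : ℕ → C} {d : ∀ k, F (k + 1) ⟶ F k} [∀ k, Projective (F k)]
  {W : ℤ → C} {δ : ∀ m, W m ⟶ W (m + 1)} (hδ : ∀ m, δ m ≫ δ (m + 1) = 0)

include hδ in
theorem CocyclesAreCoboundaries.kernel_of_exact (hd : ∀ k, d (k + 1) ≫ d k = 0) {n : ℕ}
    (hn : ∀ X k, n ≤ k → CocyclesAreCoboundaries d X k)
    (hex : ∀ m, (ShortComplex.mk _ _ (hδ m)).Exact)
    (hW : ∀ m k, CocyclesAreCoboundaries d (W m) k) (m : ℤ) (k : ℕ) :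
    CocyclesAreCoboundaries d (kernel (δ m)) k := by
  suffices ∀ j m k, n ≤ k + j → CocyclesAreCoboundaries d (kernel (δ m)) k from
    this n m k (by omega)
  intro j
  induction j with
  | zero => exact fun m k hk => hn _ k hk
  | succ j ih =>
    intro m k hk
    obtain ⟨m, rfl⟩ : ∃ m', m = m' + 1 := ⟨m - 1, by ring⟩
    have := (hex m).epi_kernelLift
    exact .of_shortExact (hd (k + 1)) (shortExact_kernel_ι_of_comp_mono (kernel.lift_ι _ _ _))
      (ih m (k + 1) (by omega)) (hW m k)

include hδ in
theorem CocyclesAreCoboundaries.of_image_of_exact {M : C} (π : W 0 ⟶ M) (ι : M ⟶ W 1)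
    [Epi π] [Mono ι] (hπι : π ≫ ι = δ 0) (hd : ∀ k, d (k + 1) ≫ d k = 0) {n : ℕ}
    (hn : ∀ X k, n ≤ k → CocyclesAreCoboundaries d X k)
    (hex : ∀ m, (ShortComplex.mk _ _ (hδ m)).Exact)
    (hW : ∀ m k, CocyclesAreCoboundaries d (W m) k) (k : ℕ) :
    CocyclesAreCoboundaries d M k :=
  .of_shortExact (hd (k + 1)) (shortExact_kernel_ι_of_comp_mono hπι)
    (.kernel_of_exact hδ hd hn hex hW 0 (k + 1)) (hW 0 k)

end DimensionShifting

section Ext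

variable {C : Type*} [Category C] [Abelian C] [EnoughProjectives C] {S : Type*} [Ring S]
  [Linear S C] {N : C} (P : ProjectiveResolution N) (X : C)

theorem CategoryTheory.ProjectiveResolution.subsingleton_ext_succ_iff (k : ℕ) :
    Subsingleton (((Ext S C (k + 1)).obj (op N)).obj X) ↔
      CocyclesAreCoboundaries (fun k => P.complex.d (k + 1) k) X k := by
  rw [(P.isoExt (k + 1) X).toLinearEquiv.toEquiv.subsingleton_congr,
    ← ModuleCat.isZero_iff_subsingleton, ← HomologicalComplex.exactAt_iff_isZero_homology,
    HomologicalComplex.exactAt_iff' _ k (k + 1) (k + 1 + 1) (by simp) (by simp),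
    ShortComplex.moduleCat_exact_iff]
  rfl

theorem CategoryTheory.ProjectiveResolution.subsingleton_ext_of_isZero {i : ℕ}
    (hi : IsZero (P.complex.X i)) :
    Subsingleton (((Ext S C i).obj (op N)).obj X) := by
  rw [(P.isoExt i X).toLinearEquiv.toEquiv.subsingleton_congr,
    ← ModuleCat.isZero_iff_subsingleton, ← HomologicalComplex.exactAt_iff_isZero_homology,
    HomologicalComplex.exactAt_iff]
  refine ShortComplex.exact_of_isZero_X₂ _ ?_
  rw [ModuleCat.isZero_iff_subsingleton]
  exact ⟨fun _ _ => hi.eq_of_src _ _⟩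

end Ext

section ModuleResolutions

variable {R}

theorem ModuleCat.comp_eq_zero_of_exact {X Y Z : ModuleCat.{0} R} {f : X ⟶ Y} {g : Y ⟶ Z}
    (h : Function.Exact f g) : f ≫ g = 0 := by
  ext x
  exact h.apply_apply_eq_zero x

variable {N : ModuleCat.{0} R} {F : ℕ → ModuleCat.{0} R} {d : ∀ k, F (k + 1) ⟶ F k}
  {ε : F 0 ⟶ N} (hproj : ∀ k, Module.Projective R (F k)) (hsurj : Function.Surjective ε)
  (hex₀ : Function.Exact (d 0) ε) (hex : ∀ k, Function.Exact (d (k + 1)) (d k))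

def ModuleCat.projectiveResolutionOfExact : ProjectiveResolution N where
  complex := ChainComplex.of F d fun k => ModuleCat.comp_eq_zero_of_exact (hex k)
  projective _ := inferInstance
  π := (ChainComplex.toSingle₀Equiv _ _).symm ⟨ε, ModuleCat.comp_eq_zero_of_exact hex₀⟩
  quasiIso := ⟨fun k => by
    cases k with
    | zero =>
      rw [ChainComplex.quasiIsoAt₀_iff, ShortComplex.quasiIso_iff_of_zeros' _ rfl rfl rfl]
      exact ⟨ModuleCat.shortComplex_exact _ hex₀, (ModuleCat.epi_iff_surjective _).2 hsurj⟩
    | succ k =>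
      rw [quasiIsoAt_iff_exactAt' _ _ (ChainComplex.exactAt_succ_single_obj _ _),
        HomologicalComplex.exactAt_iff' _ (k + 1 + 1) (k + 1) k (by simp) (by simp)]
      refine ModuleCat.shortComplex_exact _ ?_
      simp only [HomologicalComplex.sc', HomologicalComplex.shortComplexFunctor'_obj_f,
        HomologicalComplex.shortComplexFunctor'_obj_g, ChainComplex.of_d]
      exact hex k⟩

include hproj hsurj hex₀ hex in
theorem extVanishes_succ_iff (X : ModuleCat.{0} R) (k : ℕ) :
    ExtVanishes R N X (k + 1) ↔ CocyclesAreCoboundaries d X k := by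
  let P := ModuleCat.projectiveResolutionOfExact hproj hsurj hex₀ hex
  have hd : (fun k => P.complex.d (k + 1) k) = d := funext (ChainComplex.of_d F d)
  rw [ExtVanishes, P.subsingleton_ext_succ_iff, hd]
  exact Iff.rfl

theorem HasProjDimLE.extVanishes {n : ℕ} (h : HasProjDimLE R N n) (X : ModuleCat.{0} R) {i : ℕ}
    (hi : n < i) : ExtVanishes R N X i := by
  obtain ⟨F, d, ε, hproj, hsurj, hex₀, hex, hzero⟩ := h
  have := hzero i hi
  exact (ModuleCat.projectiveResolutionOfExact hproj hsurj hex₀ hex).subsingleton_ext_of_isZero X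
    (ModuleCat.isZero_of_subsingleton (F i))

include hproj hsurj hex₀ hex in
theorem IsWeakInjective.cocyclesAreCoboundaries_zero (hfin : ∀ k, Module.Finite R (F k))
    {V : ModuleCat.{0} R} (hV : IsWeakInjective R V) : CocyclesAreCoboundaries d V 0 :=
  (extVanishes_succ_iff hproj hsurj hex₀ hex V 0).1
    (hV N ⟨F, d, ε, hfin, hproj, hsurj, hex₀, hex⟩)

include hproj hsurj hex₀ hex in
theorem IsWeakInjective.cocyclesAreCoboundaries (hfin : ∀ k, Module.Finite R (F k))
    {V : ModuleCat.{0} R} (hV : IsWeakInjective R V) (k : ℕ) : CocyclesAreCoboundaries d V k := by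
  cases k with
  | zero => exact hV.cocyclesAreCoboundaries_zero hproj hsurj hex₀ hex hfin
  | succ k =>
    -- the syzygy `range (d k)` is super finitely presented, resolved by `F (k + 1 + ·)`
    have hexk : Function.Exact (d (k + 1)) (d k).hom.rangeRestrict :=
      (LinearMap.range (d k).hom).injective_subtype.comp_exact_iff_exact.1 (hex k)
    exact hV.cocyclesAreCoboundaries_zero (F := fun j => F (k + 1 + j))
      (ε := ModuleCat.ofHom (d k).hom.rangeRestrict) (fun _ => hproj _)
      (LinearMap.surjective_rangeRestrict _) hexk (fun _ => hex _) (fun _ => hfin _)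

end ModuleResolutions

/-- If the left super finitely presented dimension of `R` is finite, i.e. there is `n` with
`pd_R(M) ≤ n` for every super finitely presented `M`, then every Gorenstein weak injective
`R`-module is weak injective. -/
theorem stmt16 (n : ℕ)
    (hR : ∀ N : ModuleCat.{0} R, IsSuperFinitelyPresented R N → HasProjDimLE R N n) :
    ∀ M : ModuleCat.{0} R, IsGorensteinWeakInjective R M → IsWeakInjective R M := by
  rintro M ⟨W, δ, π, ι, hW, hδ, hπ, hι, hπι, -, -⟩ N hN
  obtain ⟨F, d, ε, hfin, hproj, hsurj, hex₀, hex⟩ := id hN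
  have : Epi π := (ModuleCat.epi_iff_surjective _).2 hπ
  have : Mono ι := (ModuleCat.mono_iff_injective _).2 hι
  have hpd (X : ModuleCat.{0} R) (k : ℕ) (hk : n ≤ k) : CocyclesAreCoboundaries d X k :=
    (extVanishes_succ_iff hproj hsurj hex₀ hex X k).1
      ((hR N hN).extVanishes X (Nat.lt_succ_of_le hk))
  have hWN (m : ℤ) : ∀ k, CocyclesAreCoboundaries d (W m) k :=
    (hW m).cocyclesAreCoboundaries hproj hsurj hex₀ hex hfin
  rw [extVanishes_succ_iff hproj hsurj hex₀ hex]
  exact .of_image_of_exact (fun m => ModuleCat.comp_eq_zero_of_exact (hδ m)) π ι hπι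
    (fun k => ModuleCat.comp_eq_zero_of_exact (hex k)) hpd
    (fun m => ModuleCat.shortComplex_exact _ (hδ m)) hWN 0
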